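/- Every toric-code correction operator C_j (j ∈ 𝒮) commutes with each of the four logical Pauli operators X̄₁, Z̄₁, X̄₂, Z̄₂. -/

import Mathlib

open scoped Matrix ComplexOrder

attribute [local instance] Matrix.normedAddCommGroup Matrix.normedSpace

namespace Toric

variable (L : ℕ) [NeZero L]

/-- Vertices of the periodic `L × L` lattice. -/
abbrev V := ZMod L × ZMod L

/-- Edges: `(v, 0)` is the horizontal edge from `v` to `v + (1,0)`,
`(v, 1)` the vertical edge from `v` to `v + (0,1)`. -/
abbrev E := V L × Fin 2

/-- Operators on the `2L²` qubits: complex matrices indexed by `E → Fin 2`. -/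
abbrev Op := Matrix (E L → Fin 2) (E L → Fin 2) ℂ

/-- Pauli `X` on edge `e`. -/
noncomputable def Xop (e : E L) : Op L := fun σ τ =>
  if τ e = 1 - σ e ∧ ∀ e' ≠ e, τ e' = σ e' then 1 else 0

/-- Pauli `Z` on edge `e`. -/
noncomputable def Zop (e : E L) : Op L :=
  Matrix.diagonal fun σ => (-1 : ℂ) ^ (σ e : ℕ)

/-- Vertex stabilizer at `v`. -/
noncomputable def Sv (v : V L) : Op L :=
  Xop L (v, 0) * Xop L (v, 1) * Xop L (v - (1, 0), 0) * Xop L (v - (0, 1), 1)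

/-- Plaquette stabilizer with south-west corner `v`. -/
noncomputable def Sp (v : V L) : Op L :=
  Zop L (v, 0) * Zop L (v, 1) * Zop L (v + (1, 0), 1) * Zop L (v + (0, 1), 0)

/-- Index set of stabilizer generators: `inl v` is the vertex generator at `v`,
`inr v` is the plaquette generator `p(v)`. -/
abbrev Gen := V L ⊕ V L

/-- The stabilizer associated with a generator index. -/
noncomputable def stab : Gen L → Op L
  | Sum.inl v => Sv L v
  | Sum.inr v => Sp L v

/-- The starred vertex `v* = (1,1)`. -/
def vStar : Gen L := Sum.inl (1, 1)

/-- The starred plaquette `p* = p(0,0)`. -/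
def pStar : Gen L := Sum.inr (0, 0)

/-- The correction operators. -/
noncomputable def corr : Gen L → Op L
  | Sum.inl (r, s) =>
      if (r, s) = ((1 : ZMod L), (1 : ZMod L)) then 1
      else if s ≠ 1 then Zop L ((r, s - 1), 1)
      else Zop L ((r - 1, 1), 0)
  | Sum.inr (r, s) =>
      if (r, s) = ((0 : ZMod L), (0 : ZMod L)) then 1
      else if s ≠ 0 then Xop L ((r, s + 1), 0)
      else Xop L ((r + 1, 0), 1)

/-- `P_j^+ = (I + S_j)/2`. -/
noncomputable def Pplus (j : Gen L) : Op L := (2⁻¹ : ℂ) • (1 + stab L j)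

/-- `P_j^- = (I - S_j)/2`. -/
noncomputable def Pminus (j : Gen L) : Op L := (2⁻¹ : ℂ) • (1 - stab L j)

/-- The correction channel `T_j(ρ) = P_j⁺ ρ P_j⁺ + C_j P_j⁻ ρ P_j⁻ C_j†` as a linear map. -/
noncomputable def Tj (j : Gen L) : Op L →ₗ[ℂ] Op L :=
  LinearMap.comp (LinearMap.mulLeft ℂ (Pplus L j)) (LinearMap.mulRight ℂ (Pplus L j)) +
  LinearMap.comp (LinearMap.mulLeft ℂ (corr L j * Pminus L j))
    (LinearMap.mulRight ℂ (Pminus L j * (corr L j)ᴴ))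

/-- The Liouvillian `L(ρ) = Σ_j (T_j(ρ) - ρ)`. -/
noncomputable def Liou : Op L →ₗ[ℂ] Op L :=
  ∑ j : Gen L, (Tj L j - LinearMap.id)

/-- Port helper: `Op L →L[ℂ] Op L` is a topological ring (no longer found by instance search). -/
instance opCLM_isTopologicalRing : IsTopologicalRing (Op L →L[ℂ] Op L) :=
  @NonUnitalSeminormedRing.toIsTopologicalRing _
    (@ContinuousLinearMap.toNormedRing ℂ (Op L) _ _ _).toSeminormedRing.toNonUnitalSeminormedRing

/-- The evolution `e^{tL}`. -/
noncomputable def expL (t : ℝ) : Op L →L[ℂ] Op L :=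
  NormedSpace.exp ((t : ℂ) • (Liou L).toContinuousLinearMap)

/-- Product of a finite family of (commuting) operators, taken in some fixed enumeration order. -/
noncomputable def listProd {ι : Type*} [Fintype ι] (f : ι → Op L) : Op L :=
  ((Finset.univ : Finset ι).toList.map f).prod

/-- Logical `X̄₁`. -/
noncomputable def X1bar : Op L := listProd L fun s : ZMod L => Xop L ((0, s), 0)

/-- Logical `Z̄₁`. -/
noncomputable def Z1bar : Op L := listProd L fun r : ZMod L => Zop L ((r, 1), 0)

/-- Logical `X̄₂`. -/
noncomputable def X2bar : Op L := listProd L fun r : ZMod L => Xop L ((r, 0), 1)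

/-- Logical `Z̄₂`. -/
noncomputable def Z2bar : Op L := listProd L fun s : ZMod L => Zop L ((1, s), 1)

/-- The single-qubit Pauli matrices `I, X, Y, Z`. -/
noncomputable def pauli : Fin 4 → Matrix (Fin 2) (Fin 2) ℂ :=
  ![1, !![0, 1; 1, 0], !![0, -Complex.I; Complex.I, 0], !![1, 0; 0, -1]]

/-- Logical counterparts `Ī, X̄₁, Ȳ₁, Z̄₁` on the first logical qubit. -/
noncomputable def logical1 : Fin 4 → Op L :=
  ![1, X1bar L, Complex.I • (X1bar L * Z1bar L), Z1bar L]

/-- Logical counterparts `Ī, X̄₂, Ȳ₂, Z̄₂` on the second logical qubit. -/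
noncomputable def logical2 : Fin 4 → Op L :=
  ![1, X2bar L, Complex.I • (X2bar L * Z2bar L), Z2bar L]

/-- Logical counterpart `P̄ = P̄₁ P̄₂` of the two-qubit Pauli indexed by `(a, b)`. -/
noncomputable def logicalP (a b : Fin 4) : Op L := logical1 L a * logical2 L b

/-- `⟨Ψ| P₁ ⊗ P₂ |Ψ⟩` for the two-qubit Pauli indexed by `(a, b)`. -/
noncomputable def expval (Ψ : Fin 2 → Fin 2 → ℂ) (a b : Fin 4) : ℂ :=
  ∑ x : Fin 2, ∑ x' : Fin 2, ∑ y : Fin 2, ∑ y' : Fin 2,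
    (starRingEnd ℂ) (Ψ x y) * pauli a x x' * pauli b y y' * Ψ x' y'

/-- The qubit `A₁`. -/
def A1 : E L := (((0 : ZMod L), (1 : ZMod L)), 0)

/-- The qubit `A₂`. -/
def A2 : E L := (((1 : ZMod L), (0 : ZMod L)), 1)

/-- The qubits `B = {((0,s),0) : s ≠ 1}`. -/
def Bfin : Finset (E L) :=
  (Finset.univ.filter fun s : ZMod L => s ≠ 1).image fun s => (((0 : ZMod L), s), (0 : Fin 2))

/-- The qubits `C = {((r,1),0) : r ≠ 0}`. -/
def Cfin : Finset (E L) :=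
  (Finset.univ.filter fun r : ZMod L => r ≠ 0).image fun r => ((r, (1 : ZMod L)), (0 : Fin 2))

/-- The qubits `B' = {((r,0),1) : r ≠ 1}`. -/
def B'fin : Finset (E L) :=
  (Finset.univ.filter fun r : ZMod L => r ≠ 1).image fun r => ((r, (0 : ZMod L)), (1 : Fin 2))

/-- The qubits `C' = {((1,s),1) : s ≠ 0}`. -/
def C'fin : Finset (E L) :=
  (Finset.univ.filter fun s : ZMod L => s ≠ 0).image fun s => (((1 : ZMod L), s), (1 : Fin 2))

/-- The remaining qubits `D`. -/
def Dfin : Finset (E L) :=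
  Finset.univ \ ({A1 L, A2 L} ∪ Bfin L ∪ B'fin L ∪ Cfin L ∪ C'fin L)

/-- The initial state `ρ₀`: `|Ψ⟩⟨Ψ|` on `A₁A₂`, `|+⟩⟨+|` on `B ∪ B'`, `|0⟩⟨0|` on `C ∪ C'`,
and the arbitrary state `ρ_D` on the remaining qubits `D`. -/
noncomputable def rho0 (Ψ : Fin 2 → Fin 2 → ℂ)
    (ρD : Matrix ({e // e ∈ Dfin L} → Fin 2) ({e // e ∈ Dfin L} → Fin 2) ℂ) : Op L :=
  fun σ τ =>
    Ψ (σ (A1 L)) (σ (A2 L)) * (starRingEnd ℂ) (Ψ (τ (A1 L)) (τ (A2 L))) *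
    (∏ _e ∈ Bfin L ∪ B'fin L, (2⁻¹ : ℂ)) *
    (∏ e ∈ Cfin L ∪ C'fin L, if σ e = 0 ∧ τ e = 0 then (1 : ℂ) else 0) *
    ρD (fun d => σ d.1) (fun d => τ d.1)

/-- The projection `Q` onto the code space. -/
noncomputable def Qproj : Op L := listProd L fun j : Gen L => Pplus L j

/-- The projection `Q⊥ = I - Q` onto the orthogonal complement of the code space. -/
noncomputable def Qperp : Op L := 1 - Qproj L

end Toric

/-- The trace norm `‖A‖₁ = tr √(AᴴA)`. -/
noncomputable def traceNorm {m : Type*} [Fintype m] [DecidableEq m] (A : Matrix m m ℂ) : ℝ :=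
  ((((Matrix.posSemidef_conjTranspose_mul_self A).1.eigenvectorUnitary : Matrix m m ℂ) *
    Matrix.diagonal (((↑) : ℝ → ℂ) ∘ (√·) ∘ (Matrix.posSemidef_conjTranspose_mul_self A).1.eigenvalues) *
    (star (Matrix.posSemidef_conjTranspose_mul_self A).1.eigenvectorUnitary : Matrix m m ℂ)).trace).re

/-!
`X_e` is the permutation matrix of the translation `σ ↦ σ + δ_e` of `(ℤ/2)^E`, so `X` operators
commute with each other, and `X_e` commutes with the diagonal `Z_{e'}` for `e ≠ e'` because the
translation does not change `σ e'`. Every correction is `I`, a single `Z` on an edge outside the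
supports of `X̄₁` and `X̄₂`, or a single `X` on an edge outside the supports of `Z̄₁` and `Z̄₂`.
-/

theorem Matrix.commute_permMatrix_diagonal {n R : Type*} [DecidableEq n] [Fintype n]
    [NonAssocSemiring R] (σ : Equiv.Perm n) (d : n → R) (h : ∀ i, d (σ i) = d i) :
    Commute (σ.permMatrix R) (Matrix.diagonal d) := by
  rw [commute_iff_eq, PEquiv.toMatrix_toPEquiv_mul, PEquiv.mul_toMatrix_toPEquiv]
  ext i j
  simp only [Matrix.submatrix_apply, id, Matrix.diagonal_apply, Equiv.eq_symm_apply, h]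

namespace Toric

variable {L : ℕ} [NeZero L]

theorem Xop_eq_permMatrix (e : E L) :
    Xop L e = (Equiv.addRight (Pi.single e 1 : E L → Fin 2)).permMatrix ℂ := by
  ext σ τ
  have one_sub_eq : ∀ a : Fin 2, 1 - a = a + 1 := by decide
  simp only [Xop, PEquiv.toMatrix_apply, Equiv.toPEquiv_apply, Option.mem_def, Option.some.injEq,
    Equiv.coe_addRight, funext_iff, Pi.add_apply, Pi.single_apply, one_sub_eq]
  congr 1
  refine propext ⟨fun ⟨he, hne⟩ x => ?_, fun hall => ⟨?_, fun x hx => ?_⟩⟩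
  · by_cases hx : x = e
    · simp [hx, he]
    · simp [hx, hne x hx]
  · simpa using (hall e).symm
  · simpa [hx] using (hall x).symm

theorem Xop_commute_Xop (e e' : E L) : Commute (Xop L e) (Xop L e') := by
  have h : Commute (Equiv.addRight (Pi.single e 1 : E L → Fin 2))
      (Equiv.addRight (Pi.single e' 1)) := by
    ext1 σ
    simp [add_right_comm]
  rw [Xop_eq_permMatrix, Xop_eq_permMatrix, commute_iff_eq, ← Matrix.permMatrix_mul,
    ← Matrix.permMatrix_mul, h.eq]

theorem Zop_commute_Zop (e e' : E L) : Commute (Zop L e) (Zop L e') :=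
  Matrix.commute_diagonal _ _

theorem Xop_commute_Zop {e e' : E L} (h : e ≠ e') : Commute (Xop L e) (Zop L e') := by
  rw [Xop_eq_permMatrix]
  refine Matrix.commute_permMatrix_diagonal _ _ fun σ => ?_
  simp [h.symm]

theorem commute_listProd {ι : Type*} [Fintype ι] {A : Op L} {f : ι → Op L}
    (h : ∀ i, Commute A (f i)) : Commute A (listProd L f) :=
  Commute.list_prod_right _ _ fun B hB => by
    obtain ⟨i, -, rfl⟩ := List.mem_map.1 hB
    exact h i

variable (L) in
def CommutesWithLogicals (A : Op L) : Prop :=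
  Commute A (X1bar L) ∧ Commute A (Z1bar L) ∧ Commute A (X2bar L) ∧ Commute A (Z2bar L)

theorem commutesWithLogicals_one : CommutesWithLogicals L 1 :=
  ⟨.one_left _, .one_left _, .one_left _, .one_left _⟩

theorem commutesWithLogicals_Zop {e : E L} (h₁ : ∀ s, e ≠ ((0, s), 0))
    (h₂ : ∀ r, e ≠ ((r, 0), 1)) : CommutesWithLogicals L (Zop L e) :=
  ⟨commute_listProd fun s => (Xop_commute_Zop (h₁ s).symm).symm,
    commute_listProd fun _ => Zop_commute_Zop _ _,
    commute_listProd fun r => (Xop_commute_Zop (h₂ r).symm).symm,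
    commute_listProd fun _ => Zop_commute_Zop _ _⟩

theorem commutesWithLogicals_Xop {e : E L} (h₁ : ∀ r, e ≠ ((r, 1), 0))
    (h₂ : ∀ s, e ≠ ((1, s), 1)) : CommutesWithLogicals L (Xop L e) :=
  ⟨commute_listProd fun _ => Xop_commute_Xop _ _,
    commute_listProd fun r => Xop_commute_Zop (h₁ r),
    commute_listProd fun _ => Xop_commute_Xop _ _,
    commute_listProd fun s => Xop_commute_Zop (h₂ s)⟩

end Toric

open Toric in
theorem toric_code_corrections_commute_with_logicals_general
    (L : ℕ) [NeZero L] (j : Gen L) :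
    Commute (corr L j) (X1bar L) ∧ Commute (corr L j) (Z1bar L) ∧
    Commute (corr L j) (X2bar L) ∧ Commute (corr L j) (Z2bar L) := by
  rcases j with ⟨r, s⟩ | ⟨r, s⟩ <;> simp only [corr] <;> split_ifs with h₀ hs
  · exact commutesWithLogicals_one
  · exact commutesWithLogicals_Zop (by simp) (by simp [sub_eq_zero, hs])
  · exact commutesWithLogicals_Zop (by simp_all [sub_eq_zero]) (by simp)
  · exact commutesWithLogicals_one
  · exact commutesWithLogicals_Xop (by simp [hs]) (by simp)
  · exact commutesWithLogicals_Xop (by simp) (by simp_all)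

open Toric in
/-- every toric-code correction operator commutes with each of the four
logical Pauli operators `X̄₁, Z̄₁, X̄₂, Z̄₂`. -/
theorem toric_code_corrections_commute_with_logicals
    (L : ℕ) [NeZero L] (hL : 2 ≤ L) (j : Gen L) :
    Commute (corr L j) (X1bar L) ∧ Commute (corr L j) (Z1bar L) ∧
    Commute (corr L j) (X2bar L) ∧ Commute (corr L j) (Z2bar L) :=
  toric_code_corrections_commute_with_logicals_general L j
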